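/- arXiv:1709.03624 — 3 statements merged into one kernel-verified Lean document; each statement's English description precedes it below -/
import Mathlib

section
/- For any kinematically admissible û ∈ V and any statically admissible flux p̂, one has E_CRE(û, p̂)² = 2(J₁(û) + J₂(p̂)), where J₁(v) = ½∫_Ω A∇v·∇v − ∫_Ω f v is the potential energy functional and J₂(p) = ½∫_Ω A⁻¹p·p is the complementary energy functional. -/
/-!
Pointwise, for symmetric invertible `A` one has
`A⁻¹(p - A g)·(p - A g) = A⁻¹p·p - 2 p·g + A g·g`. Integrating with `g = ∇û`, the cross term
`∫ p̂·∇û` equals `∫ f û` because `p̂` is statically admissible and `û ∈ V`; the three remaining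
integrals are finite by ellipticity, which bounds both `A` and `A⁻¹` as quadratic forms.
-/

open MeasureTheory Matrix

/-- The gradient of a function on `ℝ^d`, viewed as a plain vector in `Fin d → ℝ`. -/
noncomputable def grad {d : ℕ} (v : EuclideanSpace ℝ (Fin d) → ℝ)
    (x : EuclideanSpace ℝ (Fin d)) : Fin d → ℝ :=
  (gradient v x : EuclideanSpace ℝ (Fin d))

namespace Matrix

variable {n : Type*} [Fintype n] [DecidableEq n]

theorem isUnit_of_coercive {M : Matrix n n ℝ} {α : ℝ} (hα : 0 < α)
    (hM : ∀ ξ : n → ℝ, α * (∑ i, ξ i ^ 2) ≤ M *ᵥ ξ ⬝ᵥ ξ) : IsUnit M := by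
  rw [← mulVec_injective_iff_isUnit]
  refine (injective_iff_map_eq_zero (mulVecLin M)).mpr fun ξ (hξ : M *ᵥ ξ = 0) => ?_
  have h := hM ξ
  rw [hξ, zero_dotProduct] at h
  have hle : ∑ i, ξ i ^ 2 ≤ 0 := nonpos_of_mul_nonpos_right h hα
  have hsq := (Fintype.sum_eq_zero_iff_of_nonneg fun i => sq_nonneg (ξ i)).mp
    (le_antisymm hle (by positivity))
  exact funext fun i => pow_eq_zero_iff two_ne_zero |>.mp (congrFun hsq i)

theorem inv_mulVec_dotProduct_mem_Icc {M : Matrix n n ℝ} {α : ℝ} (hα : 0 < α)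
    (hM : ∀ ξ : n → ℝ, α * (∑ i, ξ i ^ 2) ≤ M *ᵥ ξ ⬝ᵥ ξ) (p : n → ℝ) :
    M⁻¹ *ᵥ p ⬝ᵥ p ∈ Set.Icc 0 (α⁻¹ * ∑ i, p i ^ 2) := by
  have hdet := (isUnit_iff_isUnit_det M).mp (isUnit_of_coercive hα hM)
  set q := M⁻¹ *ᵥ p
  have hMq : M *ᵥ q = p := by rw [mulVec_mulVec, mul_nonsing_inv M hdet, one_mulVec]
  have hcoer : α * (q ⬝ᵥ q) ≤ q ⬝ᵥ p := by
    rw [dotProduct_comm q p]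
    simpa [hMq, dotProduct, sq] using hM q
  have hqq : 0 ≤ q ⬝ᵥ q := dotProduct_self_star_nonneg q
  -- `α (q·p) ≤ p·p` follows from `0 ≤ |p - α q|²` and the coercivity `α |q|² ≤ q·p`.
  have hsq : 0 ≤ (p - α • q) ⬝ᵥ (p - α • q) := dotProduct_self_star_nonneg _
  simp only [sub_dotProduct, dotProduct_sub, smul_dotProduct, dotProduct_smul, smul_eq_mul,
    dotProduct_comm p q] at hsq
  have hpp : ∑ i, p i ^ 2 = p ⬝ᵥ p := by simp [dotProduct, sq]
  rw [Set.mem_Icc, hpp, le_inv_mul_iff₀ hα]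
  exact ⟨by nlinarith [mul_nonneg hα.le hqq], by nlinarith [mul_le_mul_of_nonneg_left hcoer hα.le]⟩

theorem IsSymm.inv_mulVec_sub_dotProduct {R : Type*} [CommRing R] {M : Matrix n n R}
    (hs : M.IsSymm) (hM : IsUnit M.det) (p g : n → R) :
    M⁻¹ *ᵥ (p - M *ᵥ g) ⬝ᵥ (p - M *ᵥ g) = M⁻¹ *ᵥ p ⬝ᵥ p - 2 * (p ⬝ᵥ g) + M *ᵥ g ⬝ᵥ g := by
  have hcancel : M⁻¹ *ᵥ (M *ᵥ g) = g := by rw [mulVec_mulVec, nonsing_inv_mul M hM, one_mulVec]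
  have hcross : M⁻¹ *ᵥ p ⬝ᵥ M *ᵥ g = p ⬝ᵥ g := by
    rw [dotProduct_mulVec, ← mulVec_transpose, hs.eq, mulVec_mulVec, mul_nonsing_inv M hM,
      one_mulVec]
  rw [mulVec_sub, hcancel, sub_dotProduct, dotProduct_sub, dotProduct_sub, hcross,
    dotProduct_comm g (M *ᵥ g), dotProduct_comm g p]
  ring

end Matrix

section Integrability

variable {X : Type*} [MeasurableSpace X] {μ : Measure X} {ι : Type*} [Fintype ι]

theorem measurable_inv_apply [DecidableEq ι] {B : X → Matrix ι ι ℝ}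
    (hB : ∀ i j, Measurable fun x => B x i j) (i j : ι) : Measurable fun x => (B x)⁻¹ i j := by
  have hB' : Measurable fun x i j => B x i j := by fun_prop
  have hdet : Measurable fun x => (B x).det :=
    (continuous_id.matrix_det (A := fun M : ι → ι → ℝ => of M)).measurable.comp hB'
  have hadj : Measurable fun x => (B x).adjugate i j :=
    ((continuous_apply j).comp ((continuous_apply i).comp
      (continuous_id.matrix_adjugate (A := fun M : ι → ι → ℝ => of M)))).measurable.comp hB'
  simp only [inv_def, Ring.inverse_eq_inv', Matrix.smul_apply, smul_eq_mul]
  exact hdet.inv.mul hadj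

theorem integrable_dotProduct {p g : X → ι → ℝ} (hp : ∀ i, MemLp (fun x => p x i) 2 μ)
    (hg : ∀ i, MemLp (fun x => g x i) 2 μ) : Integrable (fun x => p x ⬝ᵥ g x) μ :=
  integrable_finsetSum _ fun i _ => (hp i).integrable_mul (hg i)

theorem integrable_mulVec_dotProduct_self {B : X → Matrix ι ι ℝ} {g : X → ι → ℝ} {C : ℝ}
    (hB : ∀ i j, Measurable fun x => B x i j) (hg : ∀ i, MemLp (fun x => g x i) 2 μ)
    (hbound : ∀ᵐ x ∂μ, ∀ ξ : ι → ℝ, B x *ᵥ ξ ⬝ᵥ ξ ∈ Set.Icc 0 (C * ∑ i, ξ i ^ 2)) :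
    Integrable (fun x => B x *ᵥ g x ⬝ᵥ g x) μ := by
  have hmeas : AEStronglyMeasurable (fun x => B x *ᵥ g x ⬝ᵥ g x) μ := by
    have := fun i => (hg i).aestronglyMeasurable.aemeasurable
    simp only [dotProduct, mulVec]
    fun_prop
  refine ((integrable_dotProduct hg hg).const_mul C).mono' hmeas ?_
  filter_upwards [hbound] with x hx
  rw [Real.norm_eq_abs, abs_of_nonneg (hx _).1]
  simpa [dotProduct, sq] using (hx (g x)).2

end Integrability

theorem cre_eq_two_energy_sum_general {d : ℕ}
    (Ω : Set (EuclideanSpace ℝ (Fin d)))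
    (hΩopen : IsOpen Ω)
    (A : EuclideanSpace ℝ (Fin d) → Matrix (Fin d) (Fin d) ℝ)
    (hAmeas : ∀ i j, Measurable fun x => A x i j)
    (hAsymm : ∀ x ∈ Ω, (A x).IsSymm)
    (α β : ℝ) (hα : 0 < α)
    (hell : ∀ᵐ x ∂(volume.restrict Ω), ∀ ξ : Fin d → ℝ,
      α * (∑ i, ξ i ^ 2) ≤ (A x).mulVec ξ ⬝ᵥ ξ ∧ (A x).mulVec ξ ⬝ᵥ ξ ≤ β * (∑ i, ξ i ^ 2))
    (V : Submodule ℝ (EuclideanSpace ℝ (Fin d) → ℝ))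
    (hVgradL2 : ∀ v ∈ V, MemLp (gradient v) 2 (volume.restrict Ω))
    (f : EuclideanSpace ℝ (Fin d) → ℝ)
    (uhat : EuclideanSpace ℝ (Fin d) → ℝ) (huhat : uhat ∈ V)
    (phat : EuclideanSpace ℝ (Fin d) → Fin d → ℝ)
    (hphatL2 : MemLp phat 2 (volume.restrict Ω))
    (hphatSA : ∀ v ∈ V, ∫ x in Ω, phat x ⬝ᵥ grad v x = ∫ x in Ω, f x * v x) :
    ∫ x in Ω, ((A x)⁻¹).mulVec (phat x - (A x).mulVec (grad uhat x))
        ⬝ᵥ (phat x - (A x).mulVec (grad uhat x))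
      = 2 * (((1 / 2) * ∫ x in Ω, (A x).mulVec (grad uhat x) ⬝ᵥ grad uhat x)
              - (∫ x in Ω, f x * uhat x)
              + (1 / 2) * ∫ x in Ω, ((A x)⁻¹).mulVec (phat x) ⬝ᵥ phat x) := by
  have hgrad : ∀ i, MemLp (fun x => grad uhat x i) 2 (volume.restrict Ω) :=
    (hVgradL2 uhat huhat).eval_piLp
  have hphat : ∀ i, MemLp (fun x => phat x i) 2 (volume.restrict Ω) := hphatL2.eval
  have hAgg : Integrable (fun x => (A x).mulVec (grad uhat x) ⬝ᵥ grad uhat x)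
      (volume.restrict Ω) :=
    integrable_mulVec_dotProduct_self hAmeas hgrad <| hell.mono fun x hx ξ =>
      ⟨le_trans (by positivity) (hx ξ).1, (hx ξ).2⟩
  have hApp : Integrable (fun x => ((A x)⁻¹).mulVec (phat x) ⬝ᵥ phat x) (volume.restrict Ω) :=
    integrable_mulVec_dotProduct_self (measurable_inv_apply hAmeas) hphat <|
      hell.mono fun x hx => inv_mulVec_dotProduct_mem_Icc hα fun ξ => (hx ξ).1
  have hpg : Integrable (fun x => 2 * (phat x ⬝ᵥ grad uhat x)) (volume.restrict Ω) :=
    (integrable_dotProduct hphat hgrad).const_mul 2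
  have hexpand : (fun x => ((A x)⁻¹).mulVec (phat x - (A x).mulVec (grad uhat x))
        ⬝ᵥ (phat x - (A x).mulVec (grad uhat x)))
      =ᵐ[volume.restrict Ω] fun x => ((A x)⁻¹).mulVec (phat x) ⬝ᵥ phat x
        - 2 * (phat x ⬝ᵥ grad uhat x) + (A x).mulVec (grad uhat x) ⬝ᵥ grad uhat x := by
    filter_upwards [hell, ae_restrict_mem hΩopen.measurableSet] with x hx hxΩ
    exact (hAsymm x hxΩ).inv_mulVec_sub_dotProduct
      ((isUnit_iff_isUnit_det _).mp (isUnit_of_coercive hα fun ξ => (hx ξ).1)) _ _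
  rw [integral_congr_ae hexpand, integral_add (hApp.sub' hpg) hAgg, integral_sub hApp hpg,
    integral_const_mul, hphatSA uhat huhat]
  ring

/-- For a kinematically admissible `uhat ∈ V` and a statically admissible flux `phat`,
the constitutive relation error satisfies
`E_CRE(uhat,phat)² = 2 (J₁(uhat) + J₂(phat))`, where `J₁` is the potential energy functional
and `J₂` the complementary energy functional. -/
theorem cre_eq_two_energy_sum {d : ℕ}
    (Ω : Set (EuclideanSpace ℝ (Fin d)))
    (hΩopen : IsOpen Ω) (hΩbdd : Bornology.IsBounded Ω)
    (A : EuclideanSpace ℝ (Fin d) → Matrix (Fin d) (Fin d) ℝ)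
    (hAmeas : ∀ i j, Measurable fun x => A x i j)
    (hAsymm : ∀ x ∈ Ω, (A x).IsSymm)
    (α β : ℝ) (hα : 0 < α) (hβ : 0 < β)
    (hell : ∀ᵐ x ∂(volume.restrict Ω), ∀ ξ : Fin d → ℝ,
      α * (∑ i, ξ i ^ 2) ≤ (A x).mulVec ξ ⬝ᵥ ξ ∧ (A x).mulVec ξ ⬝ᵥ ξ ≤ β * (∑ i, ξ i ^ 2))
    (V : Submodule ℝ (EuclideanSpace ℝ (Fin d) → ℝ))
    (hVdiff : ∀ v ∈ V, ContDiffOn ℝ 1 v Ω)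
    (hVL2 : ∀ v ∈ V, MemLp v 2 (volume.restrict Ω))
    (hVgradL2 : ∀ v ∈ V, MemLp (gradient v) 2 (volume.restrict Ω))
    (f : EuclideanSpace ℝ (Fin d) → ℝ) (hf : MemLp f 2 (volume.restrict Ω))
    (u : EuclideanSpace ℝ (Fin d) → ℝ) (hu : u ∈ V)
    (husol : ∀ v ∈ V,
      ∫ x in Ω, (A x).mulVec (grad u x) ⬝ᵥ grad v x = ∫ x in Ω, f x * v x)
    (uhat : EuclideanSpace ℝ (Fin d) → ℝ) (huhat : uhat ∈ V)
    (phat : EuclideanSpace ℝ (Fin d) → Fin d → ℝ)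
    (hphatL2 : MemLp phat 2 (volume.restrict Ω))
    (hphatSA : ∀ v ∈ V, ∫ x in Ω, phat x ⬝ᵥ grad v x = ∫ x in Ω, f x * v x) :
    ∫ x in Ω, ((A x)⁻¹).mulVec (phat x - (A x).mulVec (grad uhat x))
        ⬝ᵥ (phat x - (A x).mulVec (grad uhat x))
      = 2 * (((1 / 2) * ∫ x in Ω, (A x).mulVec (grad uhat x) ⬝ᵥ grad uhat x)
              - (∫ x in Ω, f x * uhat x)
              + (1 / 2) * ∫ x in Ω, ((A x)⁻¹).mulVec (phat x) ⬝ᵥ phat x) :=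
  cre_eq_two_energy_sum_general Ω hΩopen A hAmeas hAsymm α β hα hell V hVgradL2 f uhat huhat phat
    hphatL2 hphatSA
end

section
/- (Guaranteed CRE error bound) For any kinematically admissible û ∈ V, one has |||u − û||| = E_CRE(û, q) where q = A∇u is the exact flux, and |||u − û||| ≤ E_CRE(û, p̂) for every statically admissible flux p̂. Hence any statically admissible flux field yields a guaranteed, fully computable upper bound on the energy-norm error. -/
open MeasureTheory Matrix

/-! With `w = ∇(u − û)` and `s = p̂ − A∇u`, the CRE integrand splits pointwise as
`A⁻¹(s + Aw)·(s + Aw) = A⁻¹s·s + 2 s·w + Aw·w` (Prager–Synge). Since `p̂` and `A∇u` are both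
statically admissible, testing with `u − û ∈ V` gives `∫ s·w = 0`, and `A⁻¹s·s ≥ 0`; for
`p̂ = A∇u` the splitting is an equality with `s = 0`. Uniform ellipticity bounds the entries of
`A` and `A⁻¹`, which makes every term integrable. -/
namespace CRE

section Pointwise

variable {ι : Type*} [Fintype ι] [DecidableEq ι] {M : Matrix ι ι ℝ} {a : ℝ}

theorem isUnit_det_of_coercive (ha : 0 < a)
    (hM : ∀ ξ : ι → ℝ, a * ∑ k, ξ k ^ 2 ≤ M *ᵥ ξ ⬝ᵥ ξ) : IsUnit M.det := by
  rw [isUnit_iff_ne_zero]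
  intro hdet
  obtain ⟨v, hv, hMv⟩ := exists_mulVec_eq_zero_iff.2 hdet
  have hsum : ∑ k, v k ^ 2 = 0 := by
    have := hM v
    rw [hMv, zero_dotProduct] at this
    exact le_antisymm (nonpos_of_mul_nonpos_right this ha) (by positivity)
  exact hv (dotProduct_self_eq_zero.1 (by simpa [dotProduct, sq] using hsum))

theorem inv_mulVec_mulVec (h : IsUnit M.det) (v : ι → ℝ) : M⁻¹ *ᵥ (M *ᵥ v) = v := by
  rw [mulVec_mulVec, nonsing_inv_mul M h, one_mulVec]

theorem mulVec_inv_mulVec (h : IsUnit M.det) (v : ι → ℝ) : M *ᵥ (M⁻¹ *ᵥ v) = v := by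
  rw [mulVec_mulVec, mul_nonsing_inv M h, one_mulVec]

theorem abs_apply_le_of_quadForm_le (hM : M.IsSymm) {c : ℝ} (h0 : ∀ ξ, 0 ≤ M *ᵥ ξ ⬝ᵥ ξ)
    (hc : ∀ ξ, M *ᵥ ξ ⬝ᵥ ξ ≤ c * ∑ k, ξ k ^ 2) (i j : ι) : |M i j| ≤ c := by
  have hdiag (k : ι) : M k k ≤ c := by
    simpa [Pi.single_apply] using hc (Pi.single k 1)
  have hform (σ : ℝ) :
      M *ᵥ (Pi.single i 1 + σ • Pi.single j 1) ⬝ᵥ (Pi.single i 1 + σ • Pi.single j 1)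
        = M i i + 2 * σ * M i j + σ ^ 2 * M j j := by
    simp [mulVec_add, mulVec_smul, dotProduct_add, dotProduct_smul, hM.apply i j]
    ring
  have hplus := hform 1 ▸ h0 _
  have hminus := hform (-1) ▸ h0 _
  rw [abs_le]
  constructor <;> nlinarith [hdiag i, hdiag j]

theorem quadForm_inv_bounds (ha : 0 < a) (hM : ∀ ξ : ι → ℝ, a * ∑ k, ξ k ^ 2 ≤ M *ᵥ ξ ⬝ᵥ ξ)
    (ξ : ι → ℝ) : 0 ≤ M⁻¹ *ᵥ ξ ⬝ᵥ ξ ∧ M⁻¹ *ᵥ ξ ⬝ᵥ ξ ≤ a⁻¹ * ∑ k, ξ k ^ 2 := by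
  -- coercivity gives `a|η|² ≤ η·ξ`, and Cauchy–Schwarz then bounds `η·ξ` by `|ξ|²/a`
  set η := M⁻¹ *ᵥ ξ
  have hlow : a * ∑ k, η k ^ 2 ≤ η ⬝ᵥ ξ := by
    simpa [η, mulVec_inv_mulVec (isUnit_det_of_coercive ha hM), dotProduct_comm] using hM η
  have hcs : (η ⬝ᵥ ξ) ^ 2 ≤ (∑ k, η k ^ 2) * ∑ k, ξ k ^ 2 :=
    Finset.sum_mul_sq_le_sq_mul_sq _ _ _
  have hη : 0 ≤ ∑ k, η k ^ 2 := by positivity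
  have hξ : 0 ≤ ∑ k, ξ k ^ 2 := by positivity
  refine ⟨by nlinarith, ?_⟩
  rw [inv_mul_eq_div, le_div_iff₀ ha]
  rcases le_or_gt (η ⬝ᵥ ξ) 0 with ht | ht
  · nlinarith
  · refine le_of_mul_le_mul_left ?_ ht
    nlinarith

theorem inv_quadForm_add_mulVec (hM : M.IsSymm) (h : IsUnit M.det) (s w : ι → ℝ) :
    M⁻¹ *ᵥ (s + M *ᵥ w) ⬝ᵥ (s + M *ᵥ w) = M⁻¹ *ᵥ s ⬝ᵥ s + 2 * (s ⬝ᵥ w) + M *ᵥ w ⬝ᵥ w := by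
  have hcross : M⁻¹ *ᵥ s ⬝ᵥ M *ᵥ w = s ⬝ᵥ w := by
    rw [dotProduct_mulVec, ← mulVec_transpose, hM.eq, mulVec_inv_mulVec h]
  rw [mulVec_add, inv_mulVec_mulVec h, add_dotProduct, dotProduct_add, dotProduct_add, hcross,
    dotProduct_comm w s, dotProduct_comm w]
  ring

end Pointwise

section Integrals

open scoped ENNReal

variable {X ι : Type*} [MeasurableSpace X] [Fintype ι] {μ : Measure X}

theorem integrable_dotProduct {p q : ℝ≥0∞} [ENNReal.HolderTriple p q 1] {g h : X → ι → ℝ}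
    (hg : MemLp g p μ) (hh : MemLp h q μ) : Integrable (fun x => g x ⬝ᵥ h x) μ :=
  integrable_finsetSum _ fun i _ => (hg.eval i).integrable_mul (hh.eval i)

variable [DecidableEq ι] {B : X → Matrix ι ι ℝ}

theorem measurable_det_of_apply (hB : ∀ i j, Measurable fun x => B x i j) :
    Measurable fun x => (B x).det := by
  simp only [det_apply']
  exact Finset.measurable_sum _ fun σ _ =>
    measurable_const.mul (Finset.measurable_prod _ fun i _ => hB (σ i) i)

theorem measurable_inv_apply (hB : ∀ i j, Measurable fun x => B x i j) (i j : ι) :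
    Measurable fun x => (B x)⁻¹ i j := by
  have hinv (x : X) : (B x)⁻¹ i j = ((B x).det)⁻¹ * ((B x).updateRow j (Pi.single i 1)).det := by
    rw [inv_def, Matrix.smul_apply, adjugate_apply, Ring.inverse_eq_inv', smul_eq_mul]
  simp only [hinv]
  refine (measurable_det_of_apply hB).inv.mul (measurable_det_of_apply fun k l => ?_)
  rcases eq_or_ne k j with rfl | hkj
  · simpa only [updateRow_self] using measurable_const
  · simpa only [updateRow_ne hkj] using hB k l

theorem memLp_mulVec_of_quadForm_le {p : ℝ≥0∞} {c : ℝ}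
    (hBm : ∀ i j, Measurable fun x => B x i j)
    (hB : ∀ᵐ x ∂μ, (B x).IsSymm ∧
      ∀ ξ, 0 ≤ B x *ᵥ ξ ⬝ᵥ ξ ∧ B x *ᵥ ξ ⬝ᵥ ξ ≤ c * ∑ k, ξ k ^ 2)
    {g : X → ι → ℝ} (hg : MemLp g p μ) : MemLp (fun x => B x *ᵥ g x) p μ := by
  refine memLp_pi_iff.2 fun i => memLp_finsetSum _ fun j _ => (hg.eval j).mul' (p := ∞) ?_
  refine memLp_top_of_bound (hBm i j).aestronglyMeasurable c (hB.mono fun x hx => ?_)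
  exact abs_apply_le_of_quadForm_le hx.1 (fun ξ => (hx.2 ξ).1) (fun ξ => (hx.2 ξ).2) i j

theorem integral_quadForm_le_of_integral_dotProduct_eq_zero {a b : ℝ} (ha : 0 < a)
    (hBm : ∀ i j, Measurable fun x => B x i j)
    (hB : ∀ᵐ x ∂μ, (B x).IsSymm ∧
      ∀ ξ, a * ∑ k, ξ k ^ 2 ≤ B x *ᵥ ξ ⬝ᵥ ξ ∧ B x *ᵥ ξ ⬝ᵥ ξ ≤ b * ∑ k, ξ k ^ 2)
    {s w : X → ι → ℝ} (hs : MemLp s 2 μ) (hw : MemLp w 2 μ)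
    (horth : ∫ x, s x ⬝ᵥ w x ∂μ = 0) :
    ∫ x, B x *ᵥ w x ⬝ᵥ w x ∂μ
      ≤ ∫ x, (B x)⁻¹ *ᵥ (s x + B x *ᵥ w x) ⬝ᵥ (s x + B x *ᵥ w x) ∂μ := by
  have hBnonneg : ∀ᵐ x ∂μ, (B x).IsSymm ∧
      ∀ ξ, 0 ≤ B x *ᵥ ξ ⬝ᵥ ξ ∧ B x *ᵥ ξ ⬝ᵥ ξ ≤ b * ∑ k, ξ k ^ 2 :=
    hB.mono fun x hx =>
      ⟨hx.1, fun ξ => ⟨(mul_nonneg ha.le (by positivity)).trans (hx.2 ξ).1, (hx.2 ξ).2⟩⟩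
  have hBinv : ∀ᵐ x ∂μ, ((B x)⁻¹).IsSymm ∧
      ∀ ξ, 0 ≤ (B x)⁻¹ *ᵥ ξ ⬝ᵥ ξ ∧ (B x)⁻¹ *ᵥ ξ ⬝ᵥ ξ ≤ a⁻¹ * ∑ k, ξ k ^ 2 :=
    hB.mono fun x hx => ⟨hx.1.inv, quadForm_inv_bounds ha fun ξ => (hx.2 ξ).1⟩
  have hflux : Integrable (fun x => (B x)⁻¹ *ᵥ s x ⬝ᵥ s x) μ :=
    integrable_dotProduct (memLp_mulVec_of_quadForm_le (measurable_inv_apply hBm) hBinv hs) hs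
  have hcross : Integrable (fun x => s x ⬝ᵥ w x) μ := integrable_dotProduct hs hw
  have henergy : Integrable (fun x => B x *ᵥ w x ⬝ᵥ w x) μ :=
    integrable_dotProduct (memLp_mulVec_of_quadForm_le hBm hBnonneg hw) hw
  have hflux_nonneg : 0 ≤ ∫ x, (B x)⁻¹ *ᵥ s x ⬝ᵥ s x ∂μ :=
    integral_nonneg_of_ae (hBinv.mono fun x hx => (hx.2 _).1)
  calc ∫ x, B x *ᵥ w x ⬝ᵥ w x ∂μ
      ≤ ∫ x, (B x)⁻¹ *ᵥ s x ⬝ᵥ s x ∂μ + 2 * ∫ x, s x ⬝ᵥ w x ∂μ + ∫ x, B x *ᵥ w x ⬝ᵥ w x ∂μ := by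
        rw [horth]; linarith
    _ = ∫ x, ((B x)⁻¹ *ᵥ s x ⬝ᵥ s x + 2 * (s x ⬝ᵥ w x) + B x *ᵥ w x ⬝ᵥ w x) ∂μ := by
        have hsum : Integrable (fun x => (B x)⁻¹ *ᵥ s x ⬝ᵥ s x + 2 * (s x ⬝ᵥ w x)) μ :=
          hflux.add (hcross.const_mul 2)
        rw [integral_add hsum henergy, integral_add hflux (hcross.const_mul 2),
          integral_const_mul]
    _ = ∫ x, (B x)⁻¹ *ᵥ (s x + B x *ᵥ w x) ⬝ᵥ (s x + B x *ᵥ w x) ∂μ :=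
        integral_congr_ae (hB.mono fun x hx => (inv_quadForm_add_mulVec hx.1
          (isUnit_det_of_coercive ha fun ξ => (hx.2 ξ).1) _ _).symm)

end Integrals

theorem memLp_grad {d : ℕ} {μ : Measure (EuclideanSpace ℝ (Fin d))} {p : ENNReal}
    {v : EuclideanSpace ℝ (Fin d) → ℝ} (hv : MemLp (gradient v) p μ) : MemLp (grad v) p μ :=
  memLp_pi_iff.2 fun i => hv.eval_piLp i

theorem grad_sub {d : ℕ} {u v : EuclideanSpace ℝ (Fin d) → ℝ} {x : EuclideanSpace ℝ (Fin d)}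
    (hu : DifferentiableAt ℝ u x) (hv : DifferentiableAt ℝ v x) :
    grad (u - v) x = grad u x - grad v x := by
  simp [grad, gradient, fderiv_sub hu hv]

end CRE

open CRE in
theorem cre_guaranteed_error_bound_general {d : ℕ}
    (Ω : Set (EuclideanSpace ℝ (Fin d)))
    (hΩopen : IsOpen Ω)
    (A : EuclideanSpace ℝ (Fin d) → Matrix (Fin d) (Fin d) ℝ)
    (hAmeas : ∀ i j, Measurable fun x => A x i j)
    (hAsymm : ∀ x ∈ Ω, (A x).IsSymm)
    (α β : ℝ) (hα : 0 < α)
    (hell : ∀ᵐ x ∂(volume.restrict Ω), ∀ ξ : Fin d → ℝ,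
      α * (∑ i, ξ i ^ 2) ≤ (A x).mulVec ξ ⬝ᵥ ξ ∧ (A x).mulVec ξ ⬝ᵥ ξ ≤ β * (∑ i, ξ i ^ 2))
    (V : Submodule ℝ (EuclideanSpace ℝ (Fin d) → ℝ))
    (hVdiff : ∀ v ∈ V, ContDiffOn ℝ 1 v Ω)
    (hVgradL2 : ∀ v ∈ V, MemLp (gradient v) 2 (volume.restrict Ω))
    (f : EuclideanSpace ℝ (Fin d) → ℝ)
    (u : EuclideanSpace ℝ (Fin d) → ℝ) (hu : u ∈ V)
    (husol : ∀ v ∈ V,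
      ∫ x in Ω, (A x).mulVec (grad u x) ⬝ᵥ grad v x = ∫ x in Ω, f x * v x)
    (uhat : EuclideanSpace ℝ (Fin d) → ℝ) (huhat : uhat ∈ V)
    :
    (Real.sqrt (∫ x in Ω, (A x).mulVec (grad (u - uhat) x) ⬝ᵥ grad (u - uhat) x)
      = Real.sqrt (∫ x in Ω,
          ((A x)⁻¹).mulVec ((A x).mulVec (grad u x) - (A x).mulVec (grad uhat x))
            ⬝ᵥ ((A x).mulVec (grad u x) - (A x).mulVec (grad uhat x))))
    ∧ ∀ phat : EuclideanSpace ℝ (Fin d) → Fin d → ℝ,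
        MemLp phat 2 (volume.restrict Ω) →
        (∀ v ∈ V, ∫ x in Ω, phat x ⬝ᵥ grad v x = ∫ x in Ω, f x * v x) →
        Real.sqrt (∫ x in Ω, (A x).mulVec (grad (u - uhat) x) ⬝ᵥ grad (u - uhat) x)
          ≤ Real.sqrt (∫ x in Ω,
              ((A x)⁻¹).mulVec (phat x - (A x).mulVec (grad uhat x))
                ⬝ᵥ (phat x - (A x).mulVec (grad uhat x))) := by
  set μ := volume.restrict Ω
  have hΩ : ∀ᵐ x ∂μ, x ∈ Ω := ae_restrict_mem hΩopen.measurableSet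
  have hA : ∀ᵐ x ∂μ, (A x).IsSymm ∧ ∀ ξ : Fin d → ℝ,
      α * ∑ k, ξ k ^ 2 ≤ A x *ᵥ ξ ⬝ᵥ ξ ∧ A x *ᵥ ξ ⬝ᵥ ξ ≤ β * ∑ k, ξ k ^ 2 := by
    filter_upwards [hell, hΩ] with x hx hxΩ using ⟨hAsymm x hxΩ, hx⟩
  have hdiff {v} (hv : v ∈ V) {x} (hx : x ∈ Ω) : DifferentiableAt ℝ v x :=
    ((hVdiff v hv).contDiffAt (hΩopen.mem_nhds hx)).differentiableAt one_ne_zero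
  have hgrad_sub : ∀ᵐ x ∂μ, grad (u - uhat) x = grad u x - grad uhat x :=
    hΩ.mono fun x hx => grad_sub (hdiff hu hx) (hdiff huhat hx)
  have he : u - uhat ∈ V := V.sub_mem hu huhat
  have hw : MemLp (grad (u - uhat)) 2 μ := memLp_grad (hVgradL2 _ he)
  refine ⟨?_, fun phat hphat hSA => ?_⟩
  · congr 1
    refine integral_congr_ae ?_
    filter_upwards [hA, hgrad_sub] with x hx hx'
    rw [← mulVec_sub, ← hx', inv_mulVec_mulVec (isUnit_det_of_coercive hα fun ξ => (hx.2 ξ).1),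
      dotProduct_comm]
  · have hflux : MemLp (fun x => A x *ᵥ grad u x) 2 μ :=
      memLp_mulVec_of_quadForm_le hAmeas (hA.mono fun x hx =>
        ⟨hx.1, fun ξ => ⟨(mul_nonneg hα.le (by positivity)).trans (hx.2 ξ).1, (hx.2 ξ).2⟩⟩)
        (memLp_grad (hVgradL2 u hu))
    have horth : ∫ x, (phat x - A x *ᵥ grad u x) ⬝ᵥ grad (u - uhat) x ∂μ = 0 := by
      simp only [sub_dotProduct]
      rw [integral_sub (integrable_dotProduct hphat hw) (integrable_dotProduct hflux hw),
        hSA _ he, husol _ he, sub_self]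
    refine Real.sqrt_le_sqrt ((integral_quadForm_le_of_integral_dotProduct_eq_zero hα hAmeas hA
      (hphat.sub hflux) hw horth).trans_eq (integral_congr_ae ?_))
    filter_upwards [hgrad_sub] with x hx
    rw [Pi.sub_apply, hx, mulVec_sub, sub_add_sub_cancel]

/-- Guaranteed CRE error bound: for any kinematically admissible `uhat ∈ V`,
`|||u − uhat||| = E_CRE(uhat, q)` with `q = A∇u` the exact flux, and
`|||u − uhat||| ≤ E_CRE(uhat, phat)` for every statically admissible flux `phat`. -/
theorem cre_guaranteed_error_bound {d : ℕ}
    (Ω : Set (EuclideanSpace ℝ (Fin d)))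
    (hΩopen : IsOpen Ω) (hΩbdd : Bornology.IsBounded Ω)
    (A : EuclideanSpace ℝ (Fin d) → Matrix (Fin d) (Fin d) ℝ)
    (hAmeas : ∀ i j, Measurable fun x => A x i j)
    (hAsymm : ∀ x ∈ Ω, (A x).IsSymm)
    (α β : ℝ) (hα : 0 < α) (hβ : 0 < β)
    (hell : ∀ᵐ x ∂(volume.restrict Ω), ∀ ξ : Fin d → ℝ,
      α * (∑ i, ξ i ^ 2) ≤ (A x).mulVec ξ ⬝ᵥ ξ ∧ (A x).mulVec ξ ⬝ᵥ ξ ≤ β * (∑ i, ξ i ^ 2))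
    (V : Submodule ℝ (EuclideanSpace ℝ (Fin d) → ℝ))
    (hVdiff : ∀ v ∈ V, ContDiffOn ℝ 1 v Ω)
    (hVL2 : ∀ v ∈ V, MemLp v 2 (volume.restrict Ω))
    (hVgradL2 : ∀ v ∈ V, MemLp (gradient v) 2 (volume.restrict Ω))
    (f : EuclideanSpace ℝ (Fin d) → ℝ) (hf : MemLp f 2 (volume.restrict Ω))
    (u : EuclideanSpace ℝ (Fin d) → ℝ) (hu : u ∈ V)
    (husol : ∀ v ∈ V,
      ∫ x in Ω, (A x).mulVec (grad u x) ⬝ᵥ grad v x = ∫ x in Ω, f x * v x)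
    (uhat : EuclideanSpace ℝ (Fin d) → ℝ) (huhat : uhat ∈ V)
    :
    (Real.sqrt (∫ x in Ω, (A x).mulVec (grad (u - uhat) x) ⬝ᵥ grad (u - uhat) x)
      = Real.sqrt (∫ x in Ω,
          ((A x)⁻¹).mulVec ((A x).mulVec (grad u x) - (A x).mulVec (grad uhat x))
            ⬝ᵥ ((A x).mulVec (grad u x) - (A x).mulVec (grad uhat x))))
    ∧ ∀ phat : EuclideanSpace ℝ (Fin d) → Fin d → ℝ,
        MemLp phat 2 (volume.restrict Ω) →
        (∀ v ∈ V, ∫ x in Ω, phat x ⬝ᵥ grad v x = ∫ x in Ω, f x * v x) →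
        Real.sqrt (∫ x in Ω, (A x).mulVec (grad (u - uhat) x) ⬝ᵥ grad (u - uhat) x)
          ≤ Real.sqrt (∫ x in Ω,
              ((A x)⁻¹).mulVec (phat x - (A x).mulVec (grad uhat x))
                ⬝ᵥ (phat x - (A x).mulVec (grad uhat x))) :=
  cre_guaranteed_error_bound_general Ω hΩopen A hAmeas hAsymm α β hα hell V hVdiff hVgradL2 f u hu
    husol uhat huhat
end

section
/- (The recast multiscale problem is well-posed and reproduces the exact solution) Let V be a real Hilbert space, B : V × V → ℝ a continuous, coercive, symmetric bilinear form, and F a continuous linear functional on V; let u ∈ V be the unique element with B(u, v) = F(v) for all v ∈ V. Let V⁰ be a finite-dimensional subspace and V^f a closed subspace of V with V = V⁰ ⊕ V^f (direct sum). For φ ∈ V⁰, let Q_ℓ(φ) ∈ V^f be the unique solution of B(φ + Q_ℓ(φ), w) = 0 for all w ∈ V^f, and let Q₀ ∈ V^f be the unique solution of B(Q₀, w) = F(w) for all w ∈ V^f. Set Ṽ = {φ + Q_ℓ(φ) : φ ∈ V⁰}. Then: (i) there exists a unique ū ∈ Q₀ + Ṽ with B(ū, v) = F(v) for all v ∈ V⁰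 (Petrov–Galerkin form); (ii) there exists a unique ū ∈ Q₀ + Ṽ with B(ū, v) = F(v) for all v ∈ Ṽ (Galerkin form); and (iii) in both cases ū = u, the exact solution. -/
/-! Every element `Q₀ + (φ + Qℓ φ)` of the multiscale space already satisfies the variational
equation against `Vf`, so testing it against `V₀` (or against `Ṽ`, which differs from `V₀` by
elements of `Vf`) makes it satisfy the equation against all of `V = V₀ + Vf`; coercivity then
forces it to be `u`. Conversely, writing `u = φ + w` with `φ ∈ V₀`, `w ∈ Vf`, the difference
`u - (Q₀ + (φ + Qℓ φ))` lies in `Vf` and is `B`-orthogonal to `Vf`, hence vanishes. -/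

theorem eq_zero_of_apply_self_eq_zero_of_coercive {V : Type*} [NormedAddCommGroup V]
    {B : V → V → ℝ} (hBcoer : ∃ c : ℝ, 0 < c ∧ ∀ v : V, c * ‖v‖ ^ 2 ≤ B v v)
    {z : V} (hz : B z z = 0) : z = 0 := by
  obtain ⟨c, hc, hcoer⟩ := hBcoer
  have hnorm : c * ‖z‖ ^ 2 ≤ 0 := hz ▸ hcoer z
  have hsq : ‖z‖ ^ 2 = 0 := le_antisymm (nonpos_of_mul_nonpos_right hnorm hc) (sq_nonneg _)
  exact norm_eq_zero.mp (pow_eq_zero_iff two_ne_zero |>.mp hsq)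

section

variable {V : Type*} [AddCommGroup V] {B : V → V → ℝ}

theorem apply_sub_left_of_additive (hBaddl : ∀ u v w : V, B (u + v) w = B u w + B v w)
    (a b w : V) : B (a - b) w = B a w - B b w :=
  eq_sub_of_add_eq (by rw [← hBaddl, sub_add_cancel])

theorem eq_of_forall_apply_eq (hBaddl : ∀ u v w : V, B (u + v) w = B u w + B v w)
    (hdef : ∀ z : V, B z z = 0 → z = 0) {x y : V} (h : ∀ v : V, B x v = B y v) : x = y :=
  sub_eq_zero.mp <| hdef _ <| by rw [apply_sub_left_of_additive hBaddl, h, sub_self]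

variable {R : Type*} [Ring R] [Module R V] {V₀ Vf : Submodule R V}
  {E : Type*} [FunLike E V ℝ] {F : E} {Qℓ : V → V} {Q₀ : V}

theorem msfem_apply_fine_eq (hBaddl : ∀ u v w : V, B (u + v) w = B u w + B v w)
    (hQℓ : ∀ φ ∈ V₀, ∀ w ∈ Vf, B (φ + Qℓ φ) w = 0) (hQ₀ : ∀ w ∈ Vf, B Q₀ w = F w)
    {φ : V} (hφ : φ ∈ V₀) {w : V} (hw : w ∈ Vf) : B (Q₀ + (φ + Qℓ φ)) w = F w := by
  rw [hBaddl, hQ₀ w hw, hQℓ φ hφ w hw, add_zero]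

theorem exists_msfem_eq (hBaddl : ∀ u v w : V, B (u + v) w = B u w + B v w)
    (hdef : ∀ z : V, B z z = 0 → z = 0) (hsup : V₀ ⊔ Vf = ⊤)
    (hQℓmem : ∀ φ ∈ V₀, Qℓ φ ∈ Vf) (hQℓ : ∀ φ ∈ V₀, ∀ w ∈ Vf, B (φ + Qℓ φ) w = 0)
    (hQ₀mem : Q₀ ∈ Vf) (hQ₀ : ∀ w ∈ Vf, B Q₀ w = F w) {u : V} (hu : ∀ v : V, B u v = F v) :
    ∃ φ ∈ V₀, u = Q₀ + (φ + Qℓ φ) := by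
  obtain ⟨φ, hφ, w, hw, rfl⟩ := Submodule.mem_sup.mp (hsup ▸ Submodule.mem_top : u ∈ V₀ ⊔ Vf)
  refine ⟨φ, hφ, sub_eq_zero.mp (hdef _ ?_)⟩
  have hdiff : φ + w - (Q₀ + (φ + Qℓ φ)) ∈ Vf := by
    rw [show φ + w - (Q₀ + (φ + Qℓ φ)) = w - Q₀ - Qℓ φ by abel]
    exact Vf.sub_mem (Vf.sub_mem hw hQ₀mem) (hQℓmem φ hφ)
  rw [apply_sub_left_of_additive hBaddl, hu, msfem_apply_fine_eq hBaddl hQℓ hQ₀ hφ hdiff,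
    sub_self]

variable [AddMonoidHomClass E V ℝ]

theorem forall_apply_eq_of_sup_eq_top (hBaddr : ∀ u v w : V, B u (v + w) = B u v + B u w)
    (hsup : V₀ ⊔ Vf = ⊤) {x : V} (h₀ : ∀ v ∈ V₀, B x v = F v) (hf : ∀ w ∈ Vf, B x w = F w)
    (v : V) : B x v = F v := by
  obtain ⟨a, ha, b, hb, rfl⟩ := Submodule.mem_sup.mp (hsup ▸ Submodule.mem_top : v ∈ V₀ ⊔ Vf)
  rw [hBaddr, h₀ a ha, hf b hb, map_add]

theorem msfem_petrovGalerkin_eq (hBaddl : ∀ u v w : V, B (u + v) w = B u w + B v w)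
    (hBaddr : ∀ u v w : V, B u (v + w) = B u v + B u w) (hdef : ∀ z : V, B z z = 0 → z = 0)
    (hsup : V₀ ⊔ Vf = ⊤) (hQℓ : ∀ φ ∈ V₀, ∀ w ∈ Vf, B (φ + Qℓ φ) w = 0)
    (hQ₀ : ∀ w ∈ Vf, B Q₀ w = F w) {u : V} (hu : ∀ v : V, B u v = F v)
    {φ : V} (hφ : φ ∈ V₀) (hPG : ∀ v ∈ V₀, B (Q₀ + (φ + Qℓ φ)) v = F v) :
    Q₀ + (φ + Qℓ φ) = u :=
  eq_of_forall_apply_eq hBaddl hdef fun v =>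
    (forall_apply_eq_of_sup_eq_top hBaddr hsup hPG
      (fun _ hw => msfem_apply_fine_eq hBaddl hQℓ hQ₀ hφ hw) v).trans (hu v).symm

theorem msfem_petrovGalerkin_of_galerkin (hBaddl : ∀ u v w : V, B (u + v) w = B u w + B v w)
    (hBaddr : ∀ u v w : V, B u (v + w) = B u v + B u w)
    (hQℓmem : ∀ φ ∈ V₀, Qℓ φ ∈ Vf) (hQℓ : ∀ φ ∈ V₀, ∀ w ∈ Vf, B (φ + Qℓ φ) w = 0)
    (hQ₀ : ∀ w ∈ Vf, B Q₀ w = F w) {φ : V} (hφ : φ ∈ V₀)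
    (hG : ∀ φ' ∈ V₀, B (Q₀ + (φ + Qℓ φ)) (φ' + Qℓ φ') = F (φ' + Qℓ φ')) :
    ∀ v ∈ V₀, B (Q₀ + (φ + Qℓ φ)) v = F v := by
  intro v hv
  have hsum := hG v hv
  rw [hBaddr, map_add, msfem_apply_fine_eq hBaddl hQℓ hQ₀ hφ (hQℓmem v hv)] at hsum
  exact add_right_cancel hsum

end

theorem msfem_recast_wellposed_and_exact_general
    {V : Type*} [NormedAddCommGroup V] [InnerProductSpace ℝ V]
    (B : V → V → ℝ)
    (hBaddl : ∀ u v w : V, B (u + v) w = B u w + B v w)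
    (hBaddr : ∀ u v w : V, B u (v + w) = B u v + B u w)
    (hBcoer : ∃ c : ℝ, 0 < c ∧ ∀ v : V, c * ‖v‖ ^ 2 ≤ B v v)
    (F : V →L[ℝ] ℝ)
    (u : V) (hu : ∀ v : V, B u v = F v)
    (V₀ Vf : Submodule ℝ V)
    (hcompl : IsCompl V₀ Vf)
    (Qℓ : V → V)
    (hQℓmem : ∀ φ ∈ V₀, Qℓ φ ∈ Vf)
    (hQℓ : ∀ φ ∈ V₀, ∀ w ∈ Vf, B (φ + Qℓ φ) w = 0)
    (Q₀ : V) (hQ₀mem : Q₀ ∈ Vf)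
    (hQ₀ : ∀ w ∈ Vf, B Q₀ w = F w) :
    (∃! ub : V, (∃ φ ∈ V₀, ub = Q₀ + (φ + Qℓ φ)) ∧ ∀ v ∈ V₀, B ub v = F v)
    ∧ (∃! ub : V, (∃ φ ∈ V₀, ub = Q₀ + (φ + Qℓ φ))
        ∧ ∀ φ' ∈ V₀, B ub (φ' + Qℓ φ') = F (φ' + Qℓ φ'))
    ∧ (∀ ub : V, (∃ φ ∈ V₀, ub = Q₀ + (φ + Qℓ φ)) →
        (∀ v ∈ V₀, B ub v = F v) → ub = u)
    ∧ (∀ ub : V, (∃ φ ∈ V₀, ub = Q₀ + (φ + Qℓ φ)) →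
        (∀ φ' ∈ V₀, B ub (φ' + Qℓ φ') = F (φ' + Qℓ φ')) → ub = u) := by
  have hdef : ∀ z : V, B z z = 0 → z = 0 := fun _ =>
    eq_zero_of_apply_self_eq_zero_of_coercive hBcoer
  have hsup := hcompl.sup_eq_top
  have hmem : ∃ φ ∈ V₀, u = Q₀ + (φ + Qℓ φ) :=
    exists_msfem_eq hBaddl hdef hsup hQℓmem hQℓ hQ₀mem hQ₀ hu
  have hPG : ∀ ub : V, (∃ φ ∈ V₀, ub = Q₀ + (φ + Qℓ φ)) →
      (∀ v ∈ V₀, B ub v = F v) → ub = u := by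
    rintro _ ⟨φ, hφ, rfl⟩
    exact msfem_petrovGalerkin_eq hBaddl hBaddr hdef hsup hQℓ hQ₀ hu hφ
  have hG : ∀ ub : V, (∃ φ ∈ V₀, ub = Q₀ + (φ + Qℓ φ)) →
      (∀ φ' ∈ V₀, B ub (φ' + Qℓ φ') = F (φ' + Qℓ φ')) → ub = u := by
    rintro _ ⟨φ, hφ, rfl⟩ hGal
    exact hPG _ ⟨φ, hφ, rfl⟩ (msfem_petrovGalerkin_of_galerkin hBaddl hBaddr hQℓmem hQℓ hQ₀ hφ hGal)
  exact ⟨⟨u, ⟨hmem, fun v _ => hu v⟩, fun ub h => hPG ub h.1 h.2⟩,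
    ⟨u, ⟨hmem, fun _ _ => hu _⟩, fun ub h => hG ub h.1 h.2⟩, hPG, hG⟩

/-- The recast multiscale (MsFEM) problem is well-posed and reproduces the exact
solution: with `V = V₀ ⊕ Vf`, corrector operators `Qℓ` (linear part) and `Q₀`
(load-dependent part), the Petrov–Galerkin and Galerkin formulations posed on the
affine multiscale space `Q₀ + {φ + Qℓ φ : φ ∈ V₀}` each admit a unique solution,
which coincides with the exact solution `u`. -/
theorem msfem_recast_wellposed_and_exact
    {V : Type*} [NormedAddCommGroup V] [InnerProductSpace ℝ V] [CompleteSpace V]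
    (B : V → V → ℝ)
    (hBaddl : ∀ u v w : V, B (u + v) w = B u w + B v w)
    (hBsmull : ∀ (c : ℝ) (u w : V), B (c • u) w = c * B u w)
    (hBaddr : ∀ u v w : V, B u (v + w) = B u v + B u w)
    (hBsmulr : ∀ (c : ℝ) (u v : V), B u (c • v) = c * B u v)
    (hBsymm : ∀ u v : V, B u v = B v u)
    (hBcont : ∃ C : ℝ, ∀ u v : V, |B u v| ≤ C * ‖u‖ * ‖v‖)
    (hBcoer : ∃ c : ℝ, 0 < c ∧ ∀ v : V, c * ‖v‖ ^ 2 ≤ B v v)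
    (F : V →L[ℝ] ℝ)
    (u : V) (hu : ∀ v : V, B u v = F v)
    (V₀ Vf : Submodule ℝ V)
    (hV₀fin : FiniteDimensional ℝ V₀)
    (hVfclosed : IsClosed (Vf : Set V))
    (hcompl : IsCompl V₀ Vf)
    (Qℓ : V → V)
    (hQℓmem : ∀ φ ∈ V₀, Qℓ φ ∈ Vf)
    (hQℓ : ∀ φ ∈ V₀, ∀ w ∈ Vf, B (φ + Qℓ φ) w = 0)
    (Q₀ : V) (hQ₀mem : Q₀ ∈ Vf)
    (hQ₀ : ∀ w ∈ Vf, B Q₀ w = F w) :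
    (∃! ub : V, (∃ φ ∈ V₀, ub = Q₀ + (φ + Qℓ φ)) ∧ ∀ v ∈ V₀, B ub v = F v)
    ∧ (∃! ub : V, (∃ φ ∈ V₀, ub = Q₀ + (φ + Qℓ φ))
        ∧ ∀ φ' ∈ V₀, B ub (φ' + Qℓ φ') = F (φ' + Qℓ φ'))
    ∧ (∀ ub : V, (∃ φ ∈ V₀, ub = Q₀ + (φ + Qℓ φ)) →
        (∀ v ∈ V₀, B ub v = F v) → ub = u)
    ∧ (∀ ub : V, (∃ φ ∈ V₀, ub = Q₀ + (φ + Qℓ φ)) →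
        (∀ φ' ∈ V₀, B ub (φ' + Qℓ φ') = F (φ' + Qℓ φ')) → ub = u) :=
  msfem_recast_wellposed_and_exact_general B hBaddl hBaddr hBcoer F u hu V₀ Vf hcompl Qℓ hQℓmem hQℓ
    Q₀ hQ₀mem hQ₀
end
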